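/- Consider the two-player game on ℝ² × ℝ² with objectives f₁(x₁, x₂) = x_{1,1}(x_{1,1} + x_{2,1} + 4x_{2,2}) + 2x_{1,2}² and f₂(x₁, x₂) = x_{2,1}(x_{1,1} + 2x_{1,2} + x_{2,1}) + x_{2,2}(2x_{1,1} + x_{1,2} + x_{2,2}), and feasible sets X₁ = X₂ = { v ∈ ℝ² : 1 − v₁² − v₂² ≥ 0 } (the closed unit disk). Then every Nash equilibrium of this game is one of the following three points: (a) x₁* = (0,0), x₂* = (0,0); (b) x₁* = (1,0), x₂* = (−1/√5, −2/√5); (c) x₁* = (−1,0), x₂* = (1/√5, 2/√5). In particular, the game has exactly three Nash equilibria. -/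

import Mathlib

/-- First player's objective in Example 1.1. -/
def f₁ (a b : ℝ × ℝ) : ℝ := a.1 * (a.1 + b.1 + 4 * b.2) + 2 * a.2 ^ 2

/-- Second player's objective in Example 1.1. -/
def f₂ (a b : ℝ × ℝ) : ℝ :=
  b.1 * (a.1 + 2 * a.2 + b.1) + b.2 * (2 * a.1 + a.2 + b.2)

/-- The common feasible set: the closed unit disk. -/
def X : Set (ℝ × ℝ) := {v | 0 ≤ 1 - v.1 ^ 2 - v.2 ^ 2}

/-- Nash equilibrium of the two-player game of Example 1.1. -/
def isNE (a b : ℝ × ℝ) : Prop :=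
  a ∈ X ∧ b ∈ X ∧ (∀ x₁ ∈ X, f₁ a b ≤ f₁ x₁ b) ∧ (∀ x₂ ∈ X, f₂ a b ≤ f₂ a x₂)

/-!
For fixed `c` in a real inner product space, `q x = ‖x‖² + ⟪c, x⟫` has a unique minimiser
`x* = unitBallArgmin c` on the closed unit ball: with `m = max 2 ‖c‖ ≥ 2`, both existence and
uniqueness can be read off the identity
`‖m • x + c‖² = 2m (q x - q x*) + m (m - 2) (‖x‖² - 1)`.
Player 2's objective has exactly this form in `x₂`, and so does player 1's in `x_{1,1}` up to
the term `2 x_{1,2}²`, which forces `x_{1,2} = 0`. Hence in an equilibrium `x₁ = (t, 0)`, player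
2 plays `-(t, 2t) / max 2 (√5 |t|)`, and player 1's best response to that is `t` again only
for `t = 0` or `|t| = 1`.
-/

open Metric
open scoped RealInnerProductSpace

section UnitBall

variable {E : Type*} [NormedAddCommGroup E] [InnerProductSpace ℝ E]

def normSqAddInner (c x : E) : ℝ := ‖x‖ ^ 2 + ⟪c, x⟫

/-- The projection of `-c / 2`, the unconstrained minimiser of `normSqAddInner c`, onto the
closed unit ball. -/
noncomputable def unitBallArgmin (c : E) : E := -(max 2 ‖c‖)⁻¹ • c

theorem norm_unitBallArgmin_le (c : E) : ‖unitBallArgmin c‖ ≤ 1 := by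
  have hm : 0 < max 2 ‖c‖ := lt_max_of_lt_left two_pos
  rw [unitBallArgmin, norm_smul, norm_neg, norm_inv, Real.norm_of_nonneg hm.le,
    inv_mul_le_one₀ hm]
  exact le_max_right _ _

theorem norm_max_smul_add_sq (c x : E) :
    ‖max 2 ‖c‖ • x + c‖ ^ 2 =
      2 * max 2 ‖c‖ * (normSqAddInner c x - normSqAddInner c (unitBallArgmin c)) +
        max 2 ‖c‖ * (max 2 ‖c‖ - 2) * (‖x‖ ^ 2 - 1) := by
  rw [unitBallArgmin]
  set m := max 2 ‖c‖ with hm_def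
  have hm : 0 < m := lt_max_of_lt_left two_pos
  have hcases : (m - 2) * (m - ‖c‖) = 0 := by
    rcases le_total 2 ‖c‖ with h | h
    · simp [hm_def, max_eq_right h]
    · simp [hm_def, max_eq_left h]
  simp only [normSqAddInner, norm_add_sq_real, norm_smul, norm_neg, norm_inv,
    Real.norm_of_nonneg hm.le, real_inner_smul_left, real_inner_smul_right,
    real_inner_self_eq_norm_sq, real_inner_comm x c]
  field_simp
  linear_combination (m + ‖c‖) * hcases

theorem isMinOn_normSqAddInner_iff {c x : E} :
    x ∈ closedBall 0 1 ∧ IsMinOn (normSqAddInner c) (closedBall 0 1) x ↔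
      x = unitBallArgmin c := by
  have hm : 0 < max 2 ‖c‖ := lt_max_of_lt_left two_pos
  have hm2 : 0 ≤ max 2 ‖c‖ - 2 := sub_nonneg.2 (le_max_left _ _)
  constructor
  · rintro ⟨hx, hmin⟩
    have hle := isMinOn_iff.1 hmin _ (mem_closedBall_zero_iff.2 (norm_unitBallArgmin_le c))
    have hx1 := mem_closedBall_zero_iff.1 hx
    have hsq : ‖max 2 ‖c‖ • x + c‖ ^ 2 ≤ 0 := by
      rw [norm_max_smul_add_sq]
      nlinarith [mul_nonneg hm.le hm2, pow_le_one₀ (n := 2) (norm_nonneg x) hx1]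
    have h0 : max 2 ‖c‖ • x = -c :=
      eq_neg_of_add_eq_zero_left <| norm_le_zero_iff.1 <| by
        nlinarith [norm_nonneg (max 2 ‖c‖ • x + c)]
    calc x = (max 2 ‖c‖)⁻¹ • (max 2 ‖c‖ • x) := (inv_smul_smul₀ hm.ne' x).symm
      _ = unitBallArgmin c := by rw [h0, smul_neg, unitBallArgmin, neg_smul]
  · rintro rfl
    refine ⟨mem_closedBall_zero_iff.2 (norm_unitBallArgmin_le c), fun y hy => ?_⟩
    have hy1 := mem_closedBall_zero_iff.1 hy
    have key : 0 ≤ 2 * max 2 ‖c‖ *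
        (normSqAddInner c y - normSqAddInner c (unitBallArgmin c)) := by
      nlinarith [norm_max_smul_add_sq c y, sq_nonneg ‖max 2 ‖c‖ • y + c‖,
        mul_nonneg (mul_nonneg hm.le hm2)
          (sub_nonneg.2 (pow_le_one₀ (n := 2) (norm_nonneg y) hy1))]
    exact sub_nonneg.1 ((mul_nonneg_iff_of_pos_left (by positivity)).1 key)

end UnitBall

theorem norm_toLp_sq (v : ℝ × ℝ) : ‖WithLp.toLp 2 v‖ ^ 2 = v.1 ^ 2 + v.2 ^ 2 := by
  simp [WithLp.prod_norm_sq_eq_of_L2]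

theorem mem_X_iff (v : ℝ × ℝ) : v ∈ X ↔ WithLp.toLp 2 v ∈ closedBall 0 1 := by
  rw [mem_closedBall_zero_iff, ← sq_le_one_iff₀ (norm_nonneg _), norm_toLp_sq, X,
    Set.mem_ofPred_eq, sub_sub, sub_nonneg]

theorem mk_zero_mem_X_iff (t : ℝ) : (t, 0) ∈ X ↔ t ∈ closedBall 0 1 := by
  simp [X, sq_le_one_iff_abs_le_one]

theorem f₁_eq (a b : ℝ × ℝ) :
    f₁ a b = normSqAddInner (b.1 + 4 * b.2) a.1 + 2 * a.2 ^ 2 := by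
  simp only [f₁, normSqAddInner, Real.norm_eq_abs, sq_abs, Real.inner_apply]
  ring

theorem f₂_eq (a b : ℝ × ℝ) :
    f₂ a b =
      normSqAddInner (WithLp.toLp 2 (a.1 + 2 * a.2, 2 * a.1 + a.2)) (WithLp.toLp 2 b) := by
  simp only [f₂, normSqAddInner, norm_toLp_sq, WithLp.prod_inner_apply, Real.inner_apply]
  ring

theorem bestResponse₁_iff {a b : ℝ × ℝ} :
    a ∈ X ∧ (∀ x ∈ X, f₁ a b ≤ f₁ x b) ↔ a = (unitBallArgmin (b.1 + 4 * b.2), 0) := by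
  have fst_mem {x : ℝ × ℝ} (hx : x ∈ X) : x.1 ∈ closedBall 0 1 := by
    rw [← mk_zero_mem_X_iff]
    simp only [X, Set.mem_ofPred_eq] at hx ⊢
    nlinarith [sq_nonneg x.2]
  constructor
  · rintro ⟨ha, hmin⟩
    have ha₂ : a.2 = 0 := by
      have := hmin (a.1, 0) ((mk_zero_mem_X_iff _).2 (fst_mem ha))
      rw [f₁_eq, f₁_eq] at this
      nlinarith [sq_nonneg a.2]
    refine Prod.ext
      (isMinOn_normSqAddInner_iff.1 ⟨fst_mem ha, isMinOn_iff.2 fun t ht => ?_⟩) ha₂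
    simpa [f₁_eq, ha₂] using hmin (t, 0) ((mk_zero_mem_X_iff t).2 ht)
  · rintro rfl
    obtain ⟨hp, hmin⟩ :=
      isMinOn_normSqAddInner_iff.2 (rfl : unitBallArgmin (b.1 + 4 * b.2) = _)
    refine ⟨(mk_zero_mem_X_iff _).2 hp, fun x hx => ?_⟩
    rw [f₁_eq, f₁_eq]
    nlinarith [isMinOn_iff.1 hmin x.1 (fst_mem hx), sq_nonneg x.2]

theorem bestResponse₂_iff {a b : ℝ × ℝ} :
    b ∈ X ∧ (∀ y ∈ X, f₂ a b ≤ f₂ a y) ↔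
      WithLp.toLp 2 b = unitBallArgmin (WithLp.toLp 2 (a.1 + 2 * a.2, 2 * a.1 + a.2)) := by
  simp only [← isMinOn_normSqAddInner_iff, isMinOn_iff, (WithLp.toLp_surjective 2).forall,
    mem_X_iff, f₂_eq]

theorem isNE_iff {a b : ℝ × ℝ} :
    isNE a b ↔ a = (unitBallArgmin (b.1 + 4 * b.2), 0) ∧
      WithLp.toLp 2 b = unitBallArgmin (WithLp.toLp 2 (a.1 + 2 * a.2, 2 * a.1 + a.2)) := by
  rw [← bestResponse₁_iff, ← bestResponse₂_iff, isNE]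
  tauto

theorem sqrt_five_mem_Ioo : √5 ∈ Set.Ioo 2 3 :=
  ⟨by rw [Real.lt_sqrt zero_le_two]; norm_num, by rw [Real.sqrt_lt' three_pos]; norm_num⟩

theorem eq_unitBallArgmin_iff {t : ℝ} :
    t = unitBallArgmin (-(9 * t) / max 2 (√5 * |t|)) ↔ t = 0 ∨ |t| = 1 := by
  set m := max 2 (√5 * |t|) with hm_def
  have hm : 0 < m := lt_max_of_lt_left two_pos
  set M := max 2 (9 * |t| / m) with hM_def
  have hM : 0 < M := lt_max_of_lt_left two_pos
  have hmM : m * M = max (2 * m) (9 * |t|) := by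
    rw [hM_def, mul_max_of_nonneg _ _ hm.le, mul_div_cancel₀ _ hm.ne', mul_comm]
  have hfix : unitBallArgmin (-(9 * t) / m) = t * (9 / (m * M)) := by
    rw [unitBallArgmin, Real.norm_eq_abs, smul_eq_mul, abs_div, abs_neg, abs_mul, abs_of_pos hm,
      abs_of_pos (by norm_num : (0:ℝ) < 9)]
    field_simp
    rw [hM_def]
    ring
  rw [hfix]
  -- For `t ≠ 0` the equation reduces to `max (2 * m) (9 * |t|) = 9`.
  by_cases ht : t = 0
  · simp [ht]
  rw [left_eq_mul₀ ht, div_eq_one_iff_eq (by positivity), hmM]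
  obtain ⟨h2, h3⟩ := sqrt_five_mem_Ioo
  have ht' : 0 < |t| := abs_pos.2 ht
  simp only [ht, false_or]
  constructor
  · intro h
    rcases le_total (2 * m) (9 * |t|) with h1 | h1
    · rw [max_eq_right h1] at h; linarith
    · rw [max_eq_left h1] at h
      rcases le_total 2 (√5 * |t|) with h4 | h4
      · rw [hm_def, max_eq_right h4] at h h1; nlinarith
      · rw [hm_def, max_eq_left h4] at h; norm_num at h
  · intro h
    rw [hm_def, h, mul_one, mul_one, max_eq_right h2.le, max_eq_right (by linarith)]

theorem norm_toLp_mk_two_mul (t : ℝ) : ‖WithLp.toLp 2 (t, 2 * t)‖ = √5 * |t| := by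
  rw [← Real.sqrt_sq (norm_nonneg _), norm_toLp_sq, ← Real.sqrt_sq_eq_abs,
    ← Real.sqrt_mul (by norm_num)]
  ring_nf

theorem isNE_mk_iff {t s : ℝ} {b : ℝ × ℝ} :
    isNE (t, s) b ↔ s = 0 ∧ (t = 0 ∨ |t| = 1) ∧ b = -(max 2 (√5 * |t|))⁻¹ • (t, 2 * t) := by
  set r := -(max 2 (√5 * |t|))⁻¹ • (t, 2 * t)
  have hr : r.1 + 4 * r.2 = -(9 * t) / max 2 (√5 * |t|) := by
    simp only [r, Prod.smul_mk, smul_eq_mul]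
    ring
  have hresp : unitBallArgmin (WithLp.toLp 2 (t, 2 * t)) = WithLp.toLp 2 r := by
    rw [unitBallArgmin, norm_toLp_mk_two_mul, WithLp.toLp_smul]
  rw [isNE_iff, Prod.mk.injEq, ← eq_unitBallArgmin_iff, ← hr]
  constructor
  · rintro ⟨⟨ht, rfl⟩, hb⟩
    rw [mul_zero, add_zero, add_zero, hresp, (WithLp.toLp_injective 2).eq_iff] at hb
    subst hb
    exact ⟨rfl, ht, rfl⟩
  · rintro ⟨rfl, ht, rfl⟩
    rw [mul_zero, add_zero, add_zero, hresp]
    exact ⟨⟨ht, rfl⟩, rfl⟩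

theorem stmt_10 :
    {p : (ℝ × ℝ) × (ℝ × ℝ) | isNE p.1 p.2} =
      {(((0 : ℝ), (0 : ℝ)), ((0 : ℝ), (0 : ℝ))),
       (((1 : ℝ), (0 : ℝ)), (-1 / Real.sqrt 5, -2 / Real.sqrt 5)),
       ((-1, (0 : ℝ)), (1 / Real.sqrt 5, 2 / Real.sqrt 5))} := by
  have h5 : max 2 √5 = √5 := max_eq_right sqrt_five_mem_Ioo.1.le
  ext ⟨⟨t, s⟩, b⟩
  simp only [Set.mem_ofPred_eq, isNE_mk_iff, abs_eq zero_le_one, Set.mem_insert_iff,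
    Set.mem_singleton_iff, Prod.mk.injEq]
  constructor
  · rintro ⟨rfl, rfl | rfl | rfl, rfl⟩ <;>
      norm_num [h5, neg_div, div_eq_mul_inv, mul_comm]
  · rintro (⟨⟨rfl, rfl⟩, rfl⟩ | ⟨⟨rfl, rfl⟩, rfl⟩ | ⟨⟨rfl, rfl⟩, rfl⟩) <;>
      norm_num [h5, neg_div, div_eq_mul_inv, mul_comm]
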